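/- Let λ, β ∈ ℝ with λ ≠ 0 and λβ < 0. Then every differentiable function u : ℝ → ℝ satisfying u'(x) = λ(βx·u(x) − 1) for all x ∈ ℝ tends to 0 as x → +∞ and also as x → −∞; in particular no solution grows exponentially in either direction. -/

import Mathlib

/-!
Multiplying `v' = c - a x v` by the integrating factor `E(x) = exp (a x² / 2)` gives
`(E v)' = c E`, so `E(x) v(x) = v(0) + c ∫₀ˣ E`. For `a > 0` the Gaussian integral is dominated
by its endpoint, `∫₀ˣ E ≤ 2 E(x) / (a x)`, because `t² ≤ x t` on `[0, x]`; hence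
`|v(x)| ≤ |v(0)| / E(x) + 2|c| / (a x) → 0`. With `a = -λβ > 0` this is the decay of `u` at `+∞`,
and the reflection `x ↦ -x` preserves the form of the equation, giving the decay at `-∞`.
-/

open Real Filter Topology intervalIntegral

lemma hasDerivAt_exp_mul_sq_div_two (a x : ℝ) :
    HasDerivAt (fun t => exp (a * t ^ 2 / 2)) (a * x * exp (a * x ^ 2 / 2)) x := by
  have h : HasDerivAt (fun t : ℝ => a * t ^ 2 / 2) (a * x) x :=
    (((hasDerivAt_pow 2 x).const_mul a).div_const 2).congr_deriv (by ring)
  exact h.exp.congr_deriv (mul_comm _ _)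

lemma integral_exp_mul_sq_div_two_le {a x : ℝ} (ha : 0 < a) (hx : 0 < x) :
    ∫ t in (0 : ℝ)..x, exp (a * t ^ 2 / 2) ≤ 2 / (a * x) * exp (a * x ^ 2 / 2) := by
  have hax : a * x / 2 ≠ 0 := by positivity
  calc ∫ t in (0 : ℝ)..x, exp (a * t ^ 2 / 2)
      ≤ ∫ t in (0 : ℝ)..x, exp (a * x / 2 * t) := by
        refine integral_mono_on hx.le
          ((by fun_prop : Continuous fun t => exp (a * t ^ 2 / 2)).intervalIntegrable _ _)
          ((by fun_prop : Continuous fun t => exp (a * x / 2 * t)).intervalIntegrable _ _)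
          fun t ⟨ht0, htx⟩ => ?_
        gcongr exp ?_
        have : t ^ 2 ≤ x * t := by nlinarith
        nlinarith
    _ = 2 / (a * x) * (exp (a * x ^ 2 / 2) - 1) := by
        rw [integral_comp_mul_left (fun t => exp t) hax, integral_exp, smul_eq_mul, mul_zero,
          exp_zero]
        field_simp
    _ ≤ 2 / (a * x) * exp (a * x ^ 2 / 2) := by
        gcongr
        linarith

section LinearEquation

variable {a c : ℝ} {v : ℝ → ℝ}

lemma exp_mul_sq_div_two_mul_eq (hv : ∀ x, HasDerivAt v (c - a * x * v x) x) (x : ℝ) :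
    exp (a * x ^ 2 / 2) * v x = v 0 + c * ∫ t in (0 : ℝ)..x, exp (a * t ^ 2 / 2) := by
  have hderiv : ∀ t ∈ Set.uIcc (0 : ℝ) x,
      HasDerivAt (fun s => exp (a * s ^ 2 / 2) * v s) (c * exp (a * t ^ 2 / 2)) t := by
    intro t _
    exact ((hasDerivAt_exp_mul_sq_div_two a t).mul (hv t)).congr_deriv (by ring)
  have hftc := integral_eq_sub_of_hasDerivAt hderiv
    ((by fun_prop : Continuous fun t => c * exp (a * t ^ 2 / 2)).intervalIntegrable 0 x)
  rw [integral_const_mul] at hftc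
  simp only [zero_pow two_ne_zero, mul_zero, zero_div, exp_zero, one_mul] at hftc
  linarith

lemma abs_le_of_hasDerivAt_eq_sub_mul (ha : 0 < a)
    (hv : ∀ x, HasDerivAt v (c - a * x * v x) x) {x : ℝ} (hx : 0 < x) :
    |v x| ≤ |v 0| * exp (-(a * x ^ 2 / 2)) + 2 * |c| / (a * x) := by
  set E := exp (a * x ^ 2 / 2)
  have hE0 : 0 < E := exp_pos _
  have hE : exp (-(a * x ^ 2 / 2)) = E⁻¹ := exp_neg _
  have hint : 0 ≤ ∫ t in (0 : ℝ)..x, exp (a * t ^ 2 / 2) :=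
    integral_nonneg hx.le fun t _ => (exp_pos _).le
  have hEv : E * |v x| ≤ |v 0| + |c| * (2 / (a * x) * E) := by
    calc E * |v x| = |v 0 + c * ∫ t in (0 : ℝ)..x, exp (a * t ^ 2 / 2)| := by
          rw [← exp_mul_sq_div_two_mul_eq hv, abs_mul, abs_of_pos hE0]
      _ ≤ |v 0| + |c| * ∫ t in (0 : ℝ)..x, exp (a * t ^ 2 / 2) :=
          (abs_add_le _ _).trans_eq (by rw [abs_mul, abs_of_nonneg hint])
      _ ≤ |v 0| + |c| * (2 / (a * x) * E) := by
          gcongr; exact integral_exp_mul_sq_div_two_le ha hx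
  calc |v x| = E⁻¹ * (E * |v x|) := by field_simp
    _ ≤ E⁻¹ * (|v 0| + |c| * (2 / (a * x) * E)) := by gcongr
    _ = |v 0| * exp (-(a * x ^ 2 / 2)) + 2 * |c| / (a * x) := by rw [hE]; field_simp

lemma tendsto_atTop_zero_of_hasDerivAt_eq_sub_mul (ha : 0 < a)
    (hv : ∀ x, HasDerivAt v (c - a * x * v x) x) :
    Tendsto v atTop (𝓝 0) := by
  have hgauss : Tendsto (fun x : ℝ => -(a * x ^ 2 / 2)) atTop atBot :=
    tendsto_neg_atTop_atBot.comp
      (((tendsto_pow_atTop two_ne_zero).const_mul_atTop ha).atTop_div_const two_pos)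
  have hbound : Tendsto (fun x => |v 0| * exp (-(a * x ^ 2 / 2)) + 2 * |c| / (a * x))
      atTop (𝓝 0) := by
    simpa using ((tendsto_exp_atBot.comp hgauss).const_mul |v 0|).add
      (tendsto_const_nhds.div_atTop (tendsto_id.const_mul_atTop ha))
  refine squeeze_zero_norm' ?_ hbound
  filter_upwards [eventually_gt_atTop 0] with x hx
  exact abs_le_of_hasDerivAt_eq_sub_mul ha hv hx

end LinearEquation

theorem variational_solutions_decay_general
    (l β : ℝ) (hlβ : l * β < 0)
    (u : ℝ → ℝ) (hu : ∀ x : ℝ, HasDerivAt u (l * (β * x * u x - 1)) x) :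
    Filter.Tendsto u Filter.atTop (nhds 0) ∧
    Filter.Tendsto u Filter.atBot (nhds 0) := by
  have ha : 0 < -(l * β) := neg_pos.mpr hlβ
  refine ⟨tendsto_atTop_zero_of_hasDerivAt_eq_sub_mul (c := -l) ha
    fun x => (hu x).congr_deriv (by ring), ?_⟩
  have hreflect : ∀ x, HasDerivAt (fun x => u (-x)) (l - -(l * β) * x * u (-x)) x :=
    fun x => ((hu (-x)).comp x (hasDerivAt_neg x)).congr_deriv (by ring)
  simpa [Function.comp_def] using
    (tendsto_atTop_zero_of_hasDerivAt_eq_sub_mul ha hreflect).comp tendsto_neg_atBot_atTop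

/-- The Ω < 0 (faux canard) case of Lemma 6.2: if `λ ≠ 0` and `λβ < 0`, every solution of
the variational equation `u' = λ(βxu − 1)` tends to 0 as `x → ±∞`; in particular no
solution grows exponentially in either direction. -/
theorem variational_solutions_decay
    (l β : ℝ) (hl : l ≠ 0) (hlβ : l * β < 0)
    (u : ℝ → ℝ) (hu : ∀ x : ℝ, HasDerivAt u (l * (β * x * u x - 1)) x) :
    Filter.Tendsto u Filter.atTop (nhds 0) ∧
    Filter.Tendsto u Filter.atBot (nhds 0) :=
  variational_solutions_decay_general l β hlβ u hu
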